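/- arXiv:2207.09993 — 5 statements merged into one kernel-verified Lean document; each statement's English description precedes it below -/
import Mathlib

section
/- Let G be a graph and let A, B ⊆ V(G) be disjoint sets such that every vertex of A is adjacent to every vertex of B. Then for every tree decomposition (T, {X_t}) of G there exists a node t ∈ V(T) such that A ⊆ X_t or B ⊆ X_t. -/
open SimpleGraph

/-- A set of vertices is independent if no two of its members are adjacent. -/
def SimpleGraph.IsIndep {V : Type} (G : SimpleGraph V) (s : Set V) : Prop :=
  s.Pairwise fun u v => ¬ G.Adj u v

/-- The independence number of the subgraph of `G` induced by `W`:
the largest size of a finite independent set contained in `W`. -/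
noncomputable def alphaOn {V : Type} (G : SimpleGraph V) (W : Set V) : ℕ :=
  sSup {n | ∃ S : Finset V, ↑S ⊆ W ∧ G.IsIndep ↑S ∧ S.card = n}

/-- A tree decomposition of `G` with decomposition tree `tree`. -/
structure TreeDecomp {V T : Type} (G : SimpleGraph V) (tree : SimpleGraph T) : Type where
  bag : T → Set V
  isTree : tree.IsTree
  mem_bag : ∀ v : V, ∃ t, v ∈ bag t
  edge_bag : ∀ ⦃u v : V⦄, G.Adj u v → ∃ t, u ∈ bag t ∧ v ∈ bag t
  conn : ∀ v : V, (tree.induce {t | v ∈ bag t}).Connected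

/-- `tree-α(G) ≤ k`: some tree decomposition of `G` has all bags of independence number `≤ k`. -/
def TreeAlphaLE {V : Type} (G : SimpleGraph V) (k : ℕ) : Prop :=
  ∃ (T : Type) (tree : SimpleGraph T) (td : TreeDecomp G tree),
    ∀ t : T, alphaOn G (td.bag t) ≤ k

/-!
The sets of nodes whose bags contain a given vertex are subtrees of the decomposition tree, and
subtrees of a tree have the Helly property. If no bag contains `A`, Helly gives `a, a' ∈ A` whose
subtrees are disjoint, and likewise `b, b' ∈ B` if no bag contains `B`. Every edge between `A` and
`B` lies in a bag, so the subtrees of `a, b, a', b'` meet cyclically. Applying Helly to the subtrees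
of `a`, of `b`, and the union of those of `a'` and `b'` (a subtree, as they meet) yields a node
shared by `a` and `a'` or by `b` and `b'`, a contradiction.
-/

namespace SimpleGraph

variable {V : Type*} {G : SimpleGraph V} {u v : V}

-- In a tree these are exactly the vertex sets of subtrees.
def IsPathConvex (G : SimpleGraph V) (S : Set V) : Prop :=
  ∀ ⦃u v : V⦄ (p : G.Walk u v), p.IsPath → u ∈ S → v ∈ S → ∀ x ∈ p.support, x ∈ S

theorem IsPathConvex.inter {S S' : Set V} (h : G.IsPathConvex S) (h' : G.IsPathConvex S') :
    G.IsPathConvex (S ∩ S') :=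
  fun _ _ p hp hu hv x hx => ⟨h p hp hu.1 hv.1 x hx, h' p hp hu.2 hv.2 x hx⟩

-- The last conjunct is what keeps `cons h r` a path in the inductive step.
theorem Walk.IsPath.exists_median {x y z : V} {p : G.Walk x y} {q : G.Walk y z}
    (hp : p.IsPath) (hq : q.IsPath) :
    ∃ r : G.Walk x z, r.IsPath ∧ (∃ m ∈ p.support, m ∈ q.support ∧ m ∈ r.support) ∧
      ∀ a ∈ r.support, a ∈ p.support ∨ a ∈ q.support := by
  classical
  induction p with
  | nil =>
    exact ⟨q, hq, ⟨_, Walk.start_mem_support _, Walk.start_mem_support _,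
      Walk.start_mem_support _⟩, fun _ ha => Or.inr ha⟩
  | @cons a b c h p ih =>
    rw [Walk.cons_isPath_iff] at hp
    by_cases haq : a ∈ q.support
    · exact ⟨q.dropUntil a haq, hq.dropUntil haq,
        ⟨a, Walk.start_mem_support _, haq, Walk.start_mem_support _⟩,
        fun _ hx => Or.inr (q.support_dropUntil_subset_support haq hx)⟩
    · obtain ⟨r, hr, ⟨m, hmp, hmq, hmr⟩, hsub⟩ := ih hp.1 hq
      have har : a ∉ r.support := fun ha => (hsub a ha).elim hp.2 haq
      refine ⟨.cons h r, (Walk.cons_isPath_iff h r).2 ⟨hr, har⟩,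
        ⟨m, by simp [hmp], hmq, by simp [hmr]⟩, ?_⟩
      simp only [Walk.support_cons, List.mem_cons, forall_eq_or_imp, true_or, true_and]
      exact fun x hx => (hsub x hx).imp_left Or.inr

theorem IsPathConvex.inter_inter_nonempty (hG : G.Preconnected) {S₁ S₂ S₃ : Set V}
    (h₁ : G.IsPathConvex S₁) (h₂ : G.IsPathConvex S₂) (h₃ : G.IsPathConvex S₃)
    (h₁₂ : (S₁ ∩ S₂).Nonempty) (h₂₃ : (S₂ ∩ S₃).Nonempty) (h₁₃ : (S₁ ∩ S₃).Nonempty) :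
    (S₁ ∩ S₂ ∩ S₃).Nonempty := by
  obtain ⟨x, hx₁, hx₂⟩ := h₁₂
  obtain ⟨y, hy₂, hy₃⟩ := h₂₃
  obtain ⟨z, hz₁, hz₃⟩ := h₁₃
  obtain ⟨p, hp⟩ := (hG x y).exists_isPath
  obtain ⟨q, hq⟩ := (hG y z).exists_isPath
  obtain ⟨r, hr, ⟨m, hmp, hmq, hmr⟩, -⟩ := hp.exists_median hq
  exact ⟨m, ⟨h₁ r hr hx₁ hz₁ m hmr, h₂ p hp hx₂ hy₂ m hmp⟩, h₃ q hq hy₃ hz₃ m hmq⟩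

theorem IsPathConvex.helly_theorem (hG : G.Preconnected) {ι : Type*} {s : Finset ι}
    (hs : s.Nonempty) (f : ι → Set V) (hf : ∀ i ∈ s, G.IsPathConvex (f i))
    (hpair : ∀ i ∈ s, ∀ j ∈ s, (f i ∩ f j).Nonempty) : ∃ x, ∀ i ∈ s, x ∈ f i := by
  induction hs using Finset.Nonempty.cons_induction generalizing f with
  | singleton a =>
    obtain ⟨x, hx, -⟩ := hpair a (Finset.mem_singleton_self a) a (Finset.mem_singleton_self a)
    exact ⟨x, by simpa using hx⟩
  | cons a s ha hs ih =>
    simp only [Finset.mem_cons, forall_eq_or_imp] at hf hpair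
    have hmeet : ∀ i ∈ s, ∀ j ∈ s, (f i ∩ f a ∩ (f j ∩ f a)).Nonempty := fun i hi j hj =>
      Set.inter_inter_distrib_right (f i) (f j) (f a) ▸ inter_inter_nonempty hG (hf.2 i hi)
        (hf.2 j hj) hf.1 ((hpair.2 i hi).2 j hj) (hpair.2 j hj).1 (hpair.2 i hi).1
    obtain ⟨x, hx⟩ := ih (fun i => f i ∩ f a) (fun i hi => (hf.2 i hi).inter hf.1) hmeet
    obtain ⟨i, hi⟩ := hs
    exact ⟨x, (Finset.forall_mem_cons ha _).2 ⟨(hx i hi).2, fun j hj => (hx j hj).1⟩⟩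

theorem IsAcyclic.support_subset_of_isPath (hG : G.IsAcyclic) {p : G.Walk u v} (hp : p.IsPath)
    (q : G.Walk u v) : p.support ⊆ q.support := by
  classical
  have : p = q.toPath := congrArg Subtype.val ((hG.subsingleton_path u v).elim ⟨p, hp⟩ _)
  exact this ▸ q.support_toPath_subset_support

theorem IsAcyclic.isPathConvex_of_preconnected_induce (hG : G.IsAcyclic) {S : Set V}
    (hS : (G.induce S).Preconnected) : G.IsPathConvex S := by
  intro u v p hp hu hv x hx
  obtain ⟨w⟩ := hS ⟨u, hu⟩ ⟨v, hv⟩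
  have hx' := hG.support_subset_of_isPath hp (w.map (Embedding.induce S).toHom) hx
  obtain ⟨y, -, rfl⟩ := List.mem_map.mp ((Walk.support_map _ _) ▸ hx')
  exact y.2

theorem IsTree.isPathConvex_union (hG : G.IsTree) {S S' : Set V} (h : G.IsPathConvex S)
    (h' : G.IsPathConvex S') (hSS' : (S ∩ S').Nonempty) : G.IsPathConvex (S ∪ S') := by
  obtain ⟨m, hm, hm'⟩ := hSS'
  intro u v p hp hu hv x hx
  obtain ⟨r, hum⟩ := (hG.connected u m).exists_isPath
  obtain ⟨r', hmv⟩ := (hG.connected m v).exists_isPath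
  have hx' := hG.isAcyclic.support_subset_of_isPath hp (r.append r') hx
  rw [Walk.mem_support_append_iff] at hx'
  rcases hx' with hx' | hx'
  · rcases hu with hu | hu
    exacts [.inl (h _ hum hu hm x hx'), .inr (h' _ hum hu hm' x hx')]
  · rcases hv with hv | hv
    exacts [.inl (h _ hmv hm hv x hx'), .inr (h' _ hmv hm' hv x hx')]

theorem IsTree.inter_nonempty_or_of_isPathConvex (hG : G.IsTree) {P P' Q Q' : Set V}
    (hP : G.IsPathConvex P) (hP' : G.IsPathConvex P') (hQ : G.IsPathConvex Q)
    (hQ' : G.IsPathConvex Q') (hPQ : (P ∩ Q).Nonempty) (hPQ' : (P ∩ Q').Nonempty)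
    (hP'Q : (P' ∩ Q).Nonempty) (hP'Q' : (P' ∩ Q').Nonempty) :
    (P ∩ P').Nonempty ∨ (Q ∩ Q').Nonempty := by
  obtain ⟨x, ⟨hxP, hxQ⟩, hxP' | hxQ'⟩ :=
    IsPathConvex.inter_inter_nonempty hG.connected.preconnected hP hQ
      (hG.isPathConvex_union hP' hQ' hP'Q') hPQ
      (hP'Q.mono fun x hx => ⟨hx.2, .inl hx.1⟩) (hPQ'.mono fun x hx => ⟨hx.1, .inr hx.2⟩)
  exacts [.inl ⟨x, hxP, hxP'⟩, .inr ⟨x, hxQ, hxQ'⟩]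

end SimpleGraph

namespace TreeDecomp

variable {V T : Type} {G : SimpleGraph V} {tree : SimpleGraph T}

theorem isPathConvex_setOf_mem_bag (td : TreeDecomp G tree) (v : V) :
    tree.IsPathConvex {t | v ∈ td.bag t} :=
  td.isTree.isAcyclic.isPathConvex_of_preconnected_induce (td.conn v).preconnected

theorem exists_subset_bag (td : TreeDecomp G tree) {s : Set V} (hs : s.Finite)
    (h : s.Pairwise fun u v => ∃ t, u ∈ td.bag t ∧ v ∈ td.bag t) : ∃ t, s ⊆ td.bag t := by
  rcases s.eq_empty_or_nonempty with rfl | hne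
  · obtain ⟨t⟩ := td.isTree.connected.nonempty
    exact ⟨t, Set.empty_subset _⟩
  have hpair : ∀ u ∈ hs.toFinset, ∀ v ∈ hs.toFinset,
      ({t | u ∈ td.bag t} ∩ {t | v ∈ td.bag t}).Nonempty := by
    intro u hu v hv
    rw [Set.Finite.mem_toFinset] at hu hv
    obtain rfl | huv := eq_or_ne u v
    · obtain ⟨t, ht⟩ := td.mem_bag u
      exact ⟨t, ht, ht⟩
    · exact h hu hv huv
  obtain ⟨t, ht⟩ := IsPathConvex.helly_theorem td.isTree.connected.preconnected
    (hs.toFinset_nonempty.2 hne) _ (fun v _ => td.isPathConvex_setOf_mem_bag v) hpair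
  exact ⟨t, fun v hv => ht v (hs.mem_toFinset.2 hv)⟩

end TreeDecomp

theorem stmt3_general {V T : Type} [Finite V] (G : SimpleGraph V) (A B : Set V)
    (hadj : ∀ a ∈ A, ∀ b ∈ B, G.Adj a b)
    (tree : SimpleGraph T) (td : TreeDecomp G tree) :
    ∃ t : T, A ⊆ td.bag t ∨ B ⊆ td.bag t := by
  by_contra! h
  have hsep : ∀ s : Set V, (∀ t, ¬ s ⊆ td.bag t) →
      ∃ u ∈ s, ∃ v ∈ s, ∀ t, ¬ (u ∈ td.bag t ∧ v ∈ td.bag t) := by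
    intro s hs
    by_contra! hpair
    obtain ⟨t, ht⟩ := td.exists_subset_bag s.toFinite fun u hu v hv _ => hpair u hu v hv
    exact hs t ht
  obtain ⟨a, ha, a', ha', hAA⟩ := hsep A fun t => (h t).1
  obtain ⟨b, hb, b', hb', hBB⟩ := hsep B fun t => (h t).2
  have hmeet : ∀ a ∈ A, ∀ b ∈ B, ({t | a ∈ td.bag t} ∩ {t | b ∈ td.bag t}).Nonempty :=
    fun a ha b hb => td.edge_bag (hadj a ha b hb)
  have hconv := td.isPathConvex_setOf_mem_bag
  obtain ⟨t, ht⟩ | ⟨t, ht⟩ := td.isTree.inter_nonempty_or_of_isPathConvex (hconv a) (hconv a')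
    (hconv b) (hconv b') (hmeet a ha b hb) (hmeet a ha b' hb') (hmeet a' ha' b hb)
    (hmeet a' ha' b' hb')
  exacts [hAA t ht, hBB t ht]

/-- if `A` and `B` are disjoint and every vertex of `A` is adjacent to every
vertex of `B`, then every tree decomposition has a bag containing `A` or a bag containing `B`. -/
theorem stmt3 {V T : Type} [Finite V] (G : SimpleGraph V) (A B : Set V)
    (hdisj : Disjoint A B) (hadj : ∀ a ∈ A, ∀ b ∈ B, G.Adj a b)
    (tree : SimpleGraph T) (td : TreeDecomp G tree) :
    ∃ t : T, A ⊆ td.bag t ∨ B ⊆ td.bag t :=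
  stmt3_general G A B hadj tree td
end

section
/- Let G be a graph and let G' be the graph obtained by taking two disjoint copies G1 and G2 of G and adding all edges between V(G1) and V(G2). Then tree-α(G') = α(G). -/
open SimpleGraph

/-- The join of two disjoint copies of `G`: all edges between the copies are added. -/
def joinCopies {V : Type} (G : SimpleGraph V) : SimpleGraph (V ⊕ V) where
  Adj x y := match x, y with
    | Sum.inl u, Sum.inl v => G.Adj u v
    | Sum.inr u, Sum.inr v => G.Adj u v
    | Sum.inl _, Sum.inr _ => True
    | Sum.inr _, Sum.inl _ => True
  symm := by
    constructor
    rintro (u | u) (v | v) h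
    · exact h.symm
    · trivial
    · trivial
    · exact h.symm
  loopless := by
    constructor
    rintro (u | u) h
    · exact G.irrefl h
    · exact G.irrefl h

/-!
Every independent set of `G'` lies in one copy, so `α(G') = α(G)` and the one-bag
decomposition gives `tree-α(G') ≤ α(G)`. Conversely, in a tree decomposition of `G'` the subtree
of bags containing a vertex of one copy meets the subtree of every vertex of the other copy.
Root the tree at `r` and call the vertex of a subtree closest to `r` its top: it lies on the
path from `r` to any vertex of the subtree. The deepest top among all these subtrees therefore
lies in every subtree of the other side, so one bag contains a copy of a maximum independent
set of `G`.
-/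

namespace SimpleGraph

variable {V : Type} {G : SimpleGraph V}

theorem Walk.IsPath.append {u v w : V} {p : G.Walk u v} {q : G.Walk v w} (hp : p.IsPath)
    (hq : q.IsPath) (h : ∀ x ∈ p.support, x ∈ q.support → x = v) : (p.append q).IsPath := by
  rw [Walk.isPath_def, Walk.support_append, List.nodup_append]
  have hq' := hq.support_nodup
  rw [← Walk.cons_tail_support, List.nodup_cons] at hq'
  refine ⟨hp.support_nodup, hq'.2, fun x hx y hy hxy => ?_⟩
  subst hxy
  rw [h x hx (Walk.cons_tail_support q ▸ List.mem_cons_of_mem _ hy)] at hy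
  exact hq'.1 hy

namespace IsAcyclic

variable (hG : G.IsAcyclic)
include hG

theorem eq_of_isPath {u v : V} {p q : G.Walk u v} (hp : p.IsPath) (hq : q.IsPath) : p = q :=
  congrArg Subtype.val ((hG.subsingleton_path u v).elim ⟨p, hp⟩ ⟨q, hq⟩)

theorem support_subset_support_of_isPath {u v : V} {p : G.Walk u v} (hp : p.IsPath)
    (q : G.Walk u v) : p.support ⊆ q.support := by
  classical
  exact hG.eq_of_isPath hp q.bypass_isPath ▸ q.support_bypass_subset_support

theorem length_eq_dist_of_isPath {u v : V} {p : G.Walk u v} (hp : p.IsPath) :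
    p.length = G.dist u v := by
  obtain ⟨q, hq, hlen⟩ := p.reachable.exists_path_of_dist
  rwa [← hG.eq_of_isPath hp hq] at hlen

theorem dist_add_dist_of_mem_support {u v z : V} {p : G.Walk u v} (hp : p.IsPath)
    (hz : z ∈ p.support) : G.dist u z + G.dist z v = G.dist u v := by
  classical
  rw [← hG.length_eq_dist_of_isPath (hp.takeUntil hz), ← hG.length_eq_dist_of_isPath
    (hp.dropUntil hz), ← hG.length_eq_dist_of_isPath hp, ← Walk.length_append, Walk.take_spec]

theorem eq_of_mem_support_of_dist_le {u v z : V} {p : G.Walk u v} (hp : p.IsPath)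
    (hz : z ∈ p.support) (hle : G.dist u v ≤ G.dist u z) : z = v := by
  classical
  have := hG.dist_add_dist_of_mem_support hp hz
  exact ((p.dropUntil z hz).reachable.dist_eq_zero_iff).mp (by omega)

theorem support_subset_of_preconnected_induce {C : Set V} (hC : (G.induce C).Preconnected)
    {x y : V} (hx : x ∈ C) (hy : y ∈ C) {p : G.Walk x y} (hp : p.IsPath) :
    ∀ z ∈ p.support, z ∈ C := by
  obtain ⟨w⟩ := hC ⟨x, hx⟩ ⟨y, hy⟩
  intro z hz
  obtain ⟨z', -, rfl⟩ := List.mem_map.mp <| Walk.support_map _ w ▸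
    hG.support_subset_support_of_isPath hp (w.map (Embedding.induce C).toHom) hz
  exact z'.2

end IsAcyclic

end SimpleGraph

namespace SimpleGraph.IsTree

variable {V : Type} {G : SimpleGraph V} (hG : G.IsTree)
include hG

theorem mem_support_of_isMinOn_dist {C : Set V} (hC : (G.induce C).Preconnected) {r u s : V}
    (hu : u ∈ C) (hmin : IsMinOn (G.dist r) C u) (hs : s ∈ C) {p : G.Walk r s}
    (hp : p.IsPath) : u ∈ p.support := by
  obtain ⟨q, hq, -⟩ := (hG.connected r u).exists_path_of_dist
  obtain ⟨q', hq', -⟩ := (hG.connected u s).exists_path_of_dist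
  -- a vertex of the geodesic from `r` to `u` other than `u` is closer to `r`, hence not in `C`
  have hqq' : (q.append q').IsPath := hq.append hq' fun z hzq hzq' =>
    hG.isAcyclic.eq_of_mem_support_of_dist_le hq hzq <| isMinOn_iff.mp hmin z <|
      hG.isAcyclic.support_subset_of_preconnected_induce hC hu hs hq' z hzq'
  rw [hG.isAcyclic.eq_of_isPath hp hqq']
  simp

theorem mem_of_isMinOn_dist_of_le {C D : Set V} (hC : (G.induce C).Preconnected)
    (hD : (G.induce D).Preconnected) {r x y : V} (hx : x ∈ C) (hmin : IsMinOn (G.dist r) C x)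
    (hy : y ∈ D) (hCD : (C ∩ D).Nonempty) (hle : G.dist r y ≤ G.dist r x) : x ∈ D := by
  obtain ⟨s, hsC, hsD⟩ := hCD
  obtain ⟨p, hp, -⟩ := (hG.connected r s).exists_path_of_dist
  obtain ⟨q, hq, -⟩ := (hG.connected r y).exists_path_of_dist
  obtain ⟨q', hq', -⟩ := (hG.connected y s).exists_path_of_dist
  have hxp := hG.isAcyclic.support_subset_support_of_isPath hp (q.append q')
    (hG.mem_support_of_isMinOn_dist hC hx hmin hsC hp)
  rcases (Walk.mem_support_append_iff _ _).mp hxp with hxq | hxq'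
  · exact hG.isAcyclic.eq_of_mem_support_of_dist_le hq hxq hle ▸ hy
  · exact hG.isAcyclic.support_subset_of_preconnected_induce hD hy hsD hq' x hxq'

theorem exists_forall_mem_or_exists_forall_mem {ι : Type*} (C : ι → Set V)
    (hC : ∀ i, (G.induce (C i)).Connected) (A B : Finset ι)
    (hAB : ∀ a ∈ A, ∀ b ∈ B, (C a ∩ C b).Nonempty) :
    (∃ v, ∀ a ∈ A, v ∈ C a) ∨ ∃ v, ∀ b ∈ B, v ∈ C b := by
  classical
  obtain ⟨r⟩ := hG.connected.nonempty
  have htop (i : ι) : ∃ u ∈ C i, IsMinOn (G.dist r) (C i) u :=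
    have hne : (C i).Nonempty := Set.nonempty_coe_sort.mp (hC i).nonempty
    ⟨_, Function.argminOn_mem _ _ hne, isMinOn_iff.mpr fun _ hz => Function.argminOn_le _ _ hz⟩
  choose t ht hmin using htop
  rcases (A ∪ B).eq_empty_or_nonempty with hempty | hne
  · exact Or.inr ⟨r, by simp_all⟩
  -- the deepest top among all the sets lies in every set of the other side
  obtain ⟨a, ha, hmax⟩ := (A ∪ B).exists_max_image (fun i => G.dist r (t i)) hne
  rcases Finset.mem_union.mp ha with haA | haB
  · exact Or.inr ⟨t a, fun b hb => hG.mem_of_isMinOn_dist_of_le (hC a).preconnected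
      (hC b).preconnected (ht a) (hmin a) (ht b) (hAB a haA b hb)
      (hmax b (Finset.mem_union_right _ hb))⟩
  · exact Or.inl ⟨t a, fun b hb => hG.mem_of_isMinOn_dist_of_le (hC a).preconnected
      (hC b).preconnected (ht a) (hmin a) (ht b) (Set.inter_comm _ _ ▸ hAB b hb a haB)
      (hmax b (Finset.mem_union_left _ hb))⟩

end SimpleGraph.IsTree

theorem TreeDecomp.exists_bag_superset_or_of_forall_adj {V T : Type} {G : SimpleGraph V}
    {tree : SimpleGraph T} (td : TreeDecomp G tree) (A B : Finset V)
    (hAB : ∀ a ∈ A, ∀ b ∈ B, G.Adj a b) :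
    (∃ t, ↑A ⊆ td.bag t) ∨ ∃ t, ↑B ⊆ td.bag t :=
  td.isTree.exists_forall_mem_or_exists_forall_mem (fun v => {t | v ∈ td.bag t}) td.conn A B
    fun a ha b hb => td.edge_bag (hAB a ha b hb)

theorem SimpleGraph.IsIndep.image {V W : Type} {G : SimpleGraph V} {H : SimpleGraph W}
    {f : V → W} (hf : ∀ a b, H.Adj (f a) (f b) → G.Adj a b) {s : Set V} (hs : G.IsIndep s) :
    H.IsIndep (f '' s) := by
  rintro _ ⟨a, ha, rfl⟩ _ ⟨b, hb, rfl⟩ hne hadj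
  exact hs ha hb (ne_of_apply_ne f hne) (hf a b hadj)

section alphaOn

variable {V : Type} (G : SimpleGraph V)

theorem nonempty_alphaOn_set (W : Set V) :
    {n | ∃ S : Finset V, ↑S ⊆ W ∧ G.IsIndep ↑S ∧ S.card = n}.Nonempty :=
  ⟨0, ∅, by simp, by simp [SimpleGraph.IsIndep], rfl⟩

theorem alphaOn_le {W : Set V} {k : ℕ}
    (h : ∀ S : Finset V, ↑S ⊆ W → G.IsIndep ↑S → S.card ≤ k) : alphaOn G W ≤ k := by
  refine csSup_le (nonempty_alphaOn_set G W) ?_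
  rintro _ ⟨S, hSW, hS, rfl⟩
  exact h S hSW hS

variable [Finite V]

theorem bddAbove_alphaOn_set (W : Set V) :
    BddAbove {n | ∃ S : Finset V, ↑S ⊆ W ∧ G.IsIndep ↑S ∧ S.card = n} := by
  have := Fintype.ofFinite V
  refine ⟨Fintype.card V, ?_⟩
  rintro _ ⟨S, -, -, rfl⟩
  exact S.card_le_univ

theorem le_alphaOn {W : Set V} {S : Finset V} (hSW : ↑S ⊆ W) (hS : G.IsIndep ↑S) :
    S.card ≤ alphaOn G W :=
  le_csSup (bddAbove_alphaOn_set G W) ⟨S, hSW, hS, rfl⟩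

theorem exists_isIndep_card_eq_alphaOn (W : Set V) :
    ∃ S : Finset V, ↑S ⊆ W ∧ G.IsIndep ↑S ∧ S.card = alphaOn G W :=
  Nat.sSup_mem (nonempty_alphaOn_set G W) (bddAbove_alphaOn_set G W)

end alphaOn

theorem card_le_alphaOn_of_map_subset {V U : Type} [Finite U] {G : SimpleGraph V}
    {H : SimpleGraph U} (f : V ↪ U) (hf : ∀ a b, H.Adj (f a) (f b) → G.Adj a b) {S : Finset V}
    (hS : G.IsIndep ↑S) {X : Set U} (hX : ↑(S.map f) ⊆ X) : S.card ≤ alphaOn H X := by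
  rw [← S.card_map f]
  exact le_alphaOn H hX (by simpa only [Finset.coe_map] using hS.image hf)

theorem treeAlphaLE_of_alphaOn_univ_le {V : Type} {G : SimpleGraph V} {k : ℕ}
    (h : alphaOn G Set.univ ≤ k) : TreeAlphaLE G k :=
  ⟨Unit, ⊥,
    { bag := fun _ => Set.univ
      isTree := .of_subsingleton
      mem_bag := fun _ => ⟨(), trivial⟩
      edge_bag := fun _ _ _ => ⟨(), trivial, trivial⟩
      conn := fun _ => @Connected.of_subsingleton _ _ ⟨⟨(), trivial⟩⟩ _ },
    fun _ => h⟩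

section joinCopies

variable {V : Type} (G : SimpleGraph V)

theorem joinCopies_adj_of_adj_elim {x y : V ⊕ V}
    (h : G.Adj (Sum.elim id id x) (Sum.elim id id y)) : (joinCopies G).Adj x y := by
  rcases x with a | a <;> rcases y with b | b <;> first | exact h | trivial

theorem joinCopies_adj_of_elim_eq {x y : V ⊕ V} (hne : x ≠ y)
    (h : Sum.elim id id x = Sum.elim id id y) : (joinCopies G).Adj x y := by
  rcases x with a | a <;> rcases y with b | b <;> first | trivial | exact absurd (congrArg _ h) hne

theorem alphaOn_joinCopies_le [Finite V] (W : Set (V ⊕ V)) :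
    alphaOn (joinCopies G) W ≤ alphaOn G Set.univ := by
  classical
  refine alphaOn_le _ fun S _ hS => ?_
  have hinj : Set.InjOn (Sum.elim id id) ↑S := fun x hx y hy hxy =>
    by_contra fun hne => hS hx hy hne (joinCopies_adj_of_elim_eq G hne hxy)
  have hind : G.IsIndep ↑(S.image (Sum.elim id id)) := by
    rw [Finset.coe_image]
    exact hS.image fun _ _ => joinCopies_adj_of_adj_elim G
  rw [← Finset.card_image_of_injOn hinj]
  exact le_alphaOn G (Set.subset_univ _) hind

end joinCopies

/-- the graph obtained from two disjoint copies of `G` by adding all edges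
between them has tree-independence number exactly `α(G)`. -/
theorem stmt4 {V : Type} [Finite V] (G : SimpleGraph V) :
    TreeAlphaLE (joinCopies G) (alphaOn G Set.univ) ∧
    ∀ k : ℕ, TreeAlphaLE (joinCopies G) k → alphaOn G Set.univ ≤ k := by
  refine ⟨treeAlphaLE_of_alphaOn_univ_le (alphaOn_joinCopies_le G Set.univ), ?_⟩
  rintro k ⟨T, tree, td, hk⟩
  obtain ⟨S, -, hS, hcard⟩ := exists_isIndep_card_eq_alphaOn G Set.univ
  rw [← hcard]
  have hcross : ∀ a ∈ S.map .inl, ∀ b ∈ S.map .inr, (joinCopies G).Adj a b := by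
    simp only [Finset.forall_mem_map]
    exact fun _ _ _ _ => trivial
  rcases td.exists_bag_superset_or_of_forall_adj _ _ hcross with ⟨t, ht⟩ | ⟨t, ht⟩
  · exact (card_le_alphaOn_of_map_subset .inl (fun _ _ h => h) hS ht).trans (hk t)
  · exact (card_le_alphaOn_of_map_subset .inr (fun _ _ h => h) hS ht).trans (hk t)
end

section
/- Let G be a graph with tree-independence number at most k and let I ⊆ V(G) be an independent set. Then there exists a partition (S, C1, C2, C3) of V(G) (some C_i may be empty) such that S is a (C1, C2, C3)-separator, α(S) ≤ k, and |I ∩ (C_i ∪ C_j)| ≥ |I|/2 − k for every pair of distinct i, j ∈ {1,2,3}. -/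
open SimpleGraph

/-- `S` separates `A` from `B` in `G`: no path of `G \ S` joins a vertex of `A`
to a vertex of `B`. -/
def SepFrom {V : Type} (G : SimpleGraph V) (S A B : Set V) : Prop :=
  ∀ a ∈ A, ∀ b ∈ B, ∀ (ha : a ∈ Sᶜ) (hb : b ∈ Sᶜ),
    ¬ (G.induce Sᶜ).Reachable ⟨a, ha⟩ ⟨b, hb⟩

/-- `S` is a `(C1, C2, C3)`-separator: it is disjoint from each `Cᵢ` and in `G \ S`
there is no path between `Cᵢ` and `Cⱼ` for `i ≠ j`. -/
def IsSep3 {V : Type} (G : SimpleGraph V) (S C1 C2 C3 : Set V) : Prop :=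
  Disjoint S C1 ∧ Disjoint S C2 ∧ Disjoint S C3 ∧
  SepFrom G S C1 C2 ∧ SepFrom G S C1 C3 ∧ SepFrom G S C2 C3

/-!
Some bag `S` of a tree decomposition is a balanced separator for `I`: every component of `G - S`
contains at most `|I|/2` vertices of `I`. The components can then be grouped into three parts
each carrying at most `|I|/2` of `I`: a maximal light union of components, one more component,
and the rest, which is light because the first two together are heavy. Since `|I ∩ S| ≤ α(S) ≤ k`,
any two of the parts together carry at least `|I| - k - |I|/2` vertices of `I`.
-/

namespace SimpleGraph

variable {V : Type*} {G : SimpleGraph V} {s s' : Set V} {u v w : V}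

def ReachableIn (G : SimpleGraph V) (s : Set V) (u v : V) : Prop :=
  ∃ p : G.Walk u v, ∀ x ∈ p.support, x ∈ s

namespace ReachableIn

lemma left_mem (h : G.ReachableIn s u v) : u ∈ s :=
  h.elim fun p hp => hp u p.start_mem_support

lemma right_mem (h : G.ReachableIn s u v) : v ∈ s :=
  h.elim fun p hp => hp v p.end_mem_support

lemma refl (hv : v ∈ s) : G.ReachableIn s v v :=
  ⟨.nil, by simpa using hv⟩

lemma symm (h : G.ReachableIn s u v) : G.ReachableIn s v u :=
  h.elim fun p hp => ⟨p.reverse, by simpa using hp⟩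

lemma trans (h : G.ReachableIn s u v) (h' : G.ReachableIn s v w) : G.ReachableIn s u w := by
  obtain ⟨p, hp⟩ := h
  obtain ⟨q, hq⟩ := h'
  refine ⟨p.append q, fun x hx => ?_⟩
  rcases Walk.mem_support_append_iff p q |>.1 hx with hx | hx
  exacts [hp x hx, hq x hx]

lemma mono (h : G.ReachableIn s u v) (hss' : s ⊆ s') : G.ReachableIn s' u v :=
  h.elim fun p hp => ⟨p, fun x hx => hss' (hp x hx)⟩

lemma of_mem_support [DecidableEq V] (p : G.Walk u v) (hp : ∀ x ∈ p.support, x ∈ s)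
    (hw : w ∈ p.support) : G.ReachableIn s w v :=
  ⟨p.dropUntil w hw, fun x hx => hp x (p.support_dropUntil_subset_support hw hx)⟩

end ReachableIn

lemma reachableIn_of_reachable_induce {u v : s} (h : (G.induce s).Reachable u v) :
    G.ReachableIn s u v :=
  h.elim fun p => ⟨p.map (Embedding.induce s).toHom, fun x hx => by
    obtain ⟨y, -, rfl⟩ := List.mem_map.1 (Walk.support_map _ p ▸ hx)
    exact y.2⟩

def componentIn (G : SimpleGraph V) (s : Set V) (v : V) : Set V :=
  {u | G.ReachableIn s u v}

lemma componentIn_eq (h : G.ReachableIn s u v) : G.componentIn s u = G.componentIn s v :=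
  Set.ext fun _ => ⟨fun hx => hx.trans h, fun hx => hx.trans h.symm⟩

lemma componentIn_subset_componentIn (h : G.componentIn s v ⊆ s') :
    G.componentIn s v ⊆ G.componentIn s' v := by
  classical
  rintro x ⟨p, hp⟩
  exact ⟨p, fun y hy => h (ReachableIn.of_mem_support p hp hy)⟩

def IsComponentUnion (G : SimpleGraph V) (s X : Set V) : Prop :=
  X ⊆ s ∧ ∀ ⦃x y⦄, x ∈ X → G.ReachableIn s x y → y ∈ X

lemma isComponentUnion_empty : G.IsComponentUnion s ∅ :=
  ⟨Set.empty_subset s, fun _ _ hx => hx.elim⟩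

lemma isComponentUnion_componentIn (s : Set V) (v : V) :
    G.IsComponentUnion s (G.componentIn s v) :=
  ⟨fun _ hx => hx.left_mem, fun _ _ hx hxy => hxy.symm.trans hx⟩

namespace IsComponentUnion

variable {X Y : Set V}

lemma union (hX : G.IsComponentUnion s X) (hY : G.IsComponentUnion s Y) :
    G.IsComponentUnion s (X ∪ Y) :=
  ⟨Set.union_subset hX.1 hY.1, fun _ _ hx hxy => hx.imp (hX.2 · hxy) (hY.2 · hxy)⟩

lemma sdiff (hX : G.IsComponentUnion s X) : G.IsComponentUnion s (s \ X) :=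
  ⟨Set.sdiff_subset, fun _ _ hx hxy => ⟨hxy.right_mem, fun hy => hx.2 (hX.2 hy hxy.symm)⟩⟩

lemma disjoint_componentIn (hX : G.IsComponentUnion s X) (hv : v ∉ X) :
    Disjoint X (G.componentIn s v) :=
  Set.disjoint_left.2 fun _ hx hxv => hv (hX.2 hx hxv)

end IsComponentUnion

lemma IsAcyclic.not_reachableIn_of_adj {T : Type*} {tree : SimpleGraph T} {t t' x : T}
    (htree : tree.IsAcyclic) (hadj : tree.Adj t t') (h : tree.ReachableIn {t'}ᶜ t x) :
    ¬ tree.ReachableIn {t}ᶜ x t' := by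
  rintro ⟨q, hq⟩
  obtain ⟨p, hp⟩ := h
  have hmem := isBridge_iff_forall_walk_mem_edges.1
    (isAcyclic_iff_forall_adj_isBridge.1 htree hadj) (p.append q)
  rcases List.mem_append.1 (Walk.edges_append p q ▸ hmem) with he | he
  · exact hp t' (p.snd_mem_support_of_mem_edges he) rfl
  · exact hq t (q.fst_mem_support_of_mem_edges he) rfl

lemma Reachable.exists_adj_dist_lt {T : Type*} {tree : SimpleGraph T} {t s : T}
    (h : tree.Reachable t s) (hne : t ≠ s) :
    ∃ t', tree.Adj t t' ∧ tree.dist t' s < tree.dist t s ∧ tree.ReachableIn {t}ᶜ t' s := by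
  obtain ⟨p, hpath, hlen⟩ := h.exists_path_of_dist
  cases p with
  | nil => exact absurd rfl hne
  | cons hadj q =>
    rw [Walk.cons_isPath_iff] at hpath
    refine ⟨_, hadj, ?_, q, fun x hx hxt => hpath.2 (hxt ▸ hx)⟩
    rw [← hlen, Walk.length_cons]
    exact Nat.lt_succ_of_le (dist_le q)

end SimpleGraph

lemma Set.inter_inter_nonempty_of_ncard_lt_add {α : Type*} {W X Y : Set α} (hW : W.Finite)
    (h : W.ncard < (W ∩ X).ncard + (W ∩ Y).ncard) : (W ∩ X ∩ Y).Nonempty := by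
  have hunion : (W ∩ X ∪ W ∩ Y).ncard ≤ W.ncard :=
    Set.ncard_le_ncard (Set.union_subset Set.inter_subset_left Set.inter_subset_left) hW
  have := Set.ncard_union_add_ncard_inter (W ∩ X) (W ∩ Y) (hW.inter_of_left X) (hW.inter_of_left Y)
  have hne : (W ∩ X ∩ (W ∩ Y)).Nonempty := Set.nonempty_of_ncard_ne_zero (by omega)
  exact hne.mono fun _ h => ⟨h.1, h.2.2⟩

namespace TreeDecomp

variable {V T : Type} {G : SimpleGraph V} {tree : SimpleGraph T} (td : TreeDecomp G tree)
  {s s' t t' : T} {u v w : V}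

lemma reachableIn_of_mem_bag (hs : v ∈ td.bag s) (hs' : v ∈ td.bag s') (ht : v ∉ td.bag t) :
    tree.ReachableIn {t}ᶜ s s' :=
  (reachableIn_of_reachable_induce ((td.conn v).preconnected ⟨s, hs⟩ ⟨s', hs'⟩)).mono
    fun _ hx hxt => ht (hxt ▸ hx)

/-- Consecutive vertices of the walk share a bag, and the subtree of bags containing a vertex
outside `bag t` avoids `t`. -/
lemma reachableIn_compl_singleton (h : G.ReachableIn (td.bag t)ᶜ u v)
    (hu : u ∈ td.bag s) (hv : v ∈ td.bag s') : tree.ReachableIn {t}ᶜ s s' := by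
  obtain ⟨p, hp⟩ := h
  induction p generalizing s with
  | nil => exact td.reachableIn_of_mem_bag hu hv (hp _ (by simp))
  | cons hadj q ih =>
    obtain ⟨r, hur, hmr⟩ := td.edge_bag hadj
    exact (td.reachableIn_of_mem_bag hu hur (hp _ (by simp))).trans
      (ih hmr hv fun x hx => hp x (by simp [hx]))

/-- A vertex of the component of `w` in `G - bag t'` lying in `bag t` would join, around the
component of `u` in `G - bag t`, the two sides of the tree edge `tt'`. -/
lemma componentIn_subset_of_adj (hadj : tree.Adj t t') (hu : u ∈ td.bag s)
    (ht' : tree.ReachableIn {t}ᶜ t' s) (hw : G.ReachableIn (td.bag t)ᶜ w u) :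
    G.componentIn (td.bag t')ᶜ w ⊆ G.componentIn (td.bag t)ᶜ u := by
  have hbag : G.componentIn (td.bag t')ᶜ w ⊆ (td.bag t)ᶜ := by
    intro b hb hbt
    obtain ⟨r, hwr⟩ := td.mem_bag w
    have hrt : tree.ReachableIn {t'}ᶜ r t := td.reachableIn_compl_singleton hb.symm hwr hbt
    have hrt' : tree.ReachableIn {t}ᶜ r t' :=
      (td.reachableIn_compl_singleton hw hwr hu).trans ht'.symm
    exact td.isTree.isAcyclic.not_reachableIn_of_adj hadj hrt.symm hrt'
  calc G.componentIn (td.bag t')ᶜ w ⊆ G.componentIn (td.bag t)ᶜ w :=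
        componentIn_subset_componentIn hbag
    _ = G.componentIn (td.bag t)ᶜ u := componentIn_eq hw

/-- If every bag had a heavy component, take one, `C` at the node `t`, with `|C|` minimal and,
for a fixed bag at `s` meeting `C`, with `t` as close to `s` as possible. The heavy component at
the next node towards `s` lies inside `C`, hence equals `C` by minimality, contradicting the
choice of `t`. -/
theorem exists_balanced_bag [Finite V] (W : Set V) :
    ∃ t, ∀ v ∉ td.bag t, 2 * (W ∩ G.componentIn (td.bag t)ᶜ v).ncard ≤ W.ncard := by
  by_contra! hheavy
  obtain ⟨t₀⟩ := td.isTree.connected.nonempty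
  obtain ⟨⟨t₁, u⟩, ⟨hu, hCheavy⟩, hCmin⟩ :=
    (measure fun p : T × V => (G.componentIn (td.bag p.1)ᶜ p.2).ncard).wf.has_min
      {p | p.2 ∉ td.bag p.1 ∧ W.ncard < 2 * (W ∩ G.componentIn (td.bag p.1)ᶜ p.2).ncard}
      (let ⟨v, hv⟩ := hheavy t₀; ⟨(t₀, v), hv⟩)
  set C := G.componentIn (td.bag t₁)ᶜ u
  obtain ⟨s, hs⟩ := td.mem_bag u
  obtain ⟨t, ⟨hut, hC⟩, hclosest⟩ := (measure fun t => tree.dist t s).wf.has_min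
    {t | u ∉ td.bag t ∧ G.componentIn (td.bag t)ᶜ u = C} ⟨t₁, hu, rfl⟩
  obtain ⟨t', hadj, hdist, ht's⟩ :=
    (td.isTree.connected.preconnected t s).exists_adj_dist_lt fun h => hut (h ▸ hs)
  obtain ⟨v', hv', hheavy'⟩ := hheavy t'
  obtain ⟨w, ⟨-, hw⟩, hw'⟩ := Set.inter_inter_nonempty_of_ncard_lt_add (Set.toFinite W)
    (X := C) (Y := G.componentIn (td.bag t')ᶜ v') (by omega)
  rw [← hC] at hw
  have hsub : G.componentIn (td.bag t')ᶜ v' ⊆ C := by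
    rw [← componentIn_eq hw', ← hC]
    exact td.componentIn_subset_of_adj hadj hs ht's hw
  have heq : G.componentIn (td.bag t')ᶜ v' = C :=
    Set.eq_of_subset_of_ncard_le hsub (not_lt.1 (hCmin (t', v') ⟨hv', hheavy'⟩))
  have hu' : u ∈ G.componentIn (td.bag t')ᶜ v' := heq ▸ ReachableIn.refl hu
  exact hclosest t' ⟨hu'.left_mem, heq ▸ componentIn_eq hu'⟩ hdist

end TreeDecomp

section Split

variable {V : Type} {G : SimpleGraph V} {S W : Set V}

lemma sepFrom_of_isComponentUnion {A B : Set V} (hA : G.IsComponentUnion Sᶜ A)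
    (hAB : Disjoint A B) : SepFrom G S A B :=
  fun _ ha _ hb _ _ hreach =>
    Set.disjoint_left.1 hAB (hA.2 ha (reachableIn_of_reachable_induce hreach)) hb

lemma exists_isComponentUnion_pair [Finite V]
    (hS : ∀ v ∉ S, 2 * (W ∩ G.componentIn Sᶜ v).ncard ≤ W.ncard) :
    ∃ C₁ C₂, G.IsComponentUnion Sᶜ C₁ ∧ G.IsComponentUnion Sᶜ C₂ ∧ Disjoint C₁ C₂ ∧
      2 * (W ∩ C₁).ncard ≤ W.ncard ∧ 2 * (W ∩ C₂).ncard ≤ W.ncard ∧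
      2 * (W ∩ (Sᶜ \ (C₁ ∪ C₂))).ncard ≤ W.ncard := by
  obtain ⟨C₁, ⟨h₁, hw₁⟩, hmax⟩ := (Set.toFinite
    {X | G.IsComponentUnion Sᶜ X ∧ 2 * (W ∩ X).ncard ≤ W.ncard}).exists_maximal
    ⟨∅, isComponentUnion_empty, by simp⟩
  by_cases hcov : Sᶜ ⊆ C₁
  · refine ⟨C₁, ∅, h₁, isComponentUnion_empty, Set.disjoint_empty C₁, hw₁, by simp, ?_⟩
    rw [Set.union_empty, Set.sdiff_eq_empty.2 hcov, Set.inter_empty, Set.ncard_empty]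
    exact Nat.zero_le _
  obtain ⟨x, hxS, hx₁⟩ := Set.not_subset.1 hcov
  have h₂ := G.isComponentUnion_componentIn Sᶜ x
  have hheavy : W.ncard < 2 * (W ∩ (C₁ ∪ G.componentIn Sᶜ x)).ncard := by
    by_contra! hle
    exact hx₁ (hmax ⟨h₁.union h₂, hle⟩ Set.subset_union_left (Or.inr (ReachableIn.refl hxS)))
  refine ⟨C₁, _, h₁, h₂, h₁.disjoint_componentIn hx₁, hw₁, hS x hxS, ?_⟩
  set U := C₁ ∪ G.componentIn Sᶜ x
  have hrest : (W ∩ (Sᶜ \ U)).ncard ≤ (W \ U).ncard :=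
    Set.ncard_le_ncard fun y hy => ⟨hy.1, hy.2.2⟩
  have := Set.ncard_inter_add_ncard_sdiff_eq_ncard W U
  omega

theorem exists_isSep3_balanced [Finite V]
    (hS : ∀ v ∉ S, 2 * (W ∩ G.componentIn Sᶜ v).ncard ≤ W.ncard) :
    ∃ C₁ C₂ C₃, S ∪ C₁ ∪ C₂ ∪ C₃ = Set.univ ∧
      Disjoint C₁ C₂ ∧ Disjoint C₁ C₃ ∧ Disjoint C₂ C₃ ∧ IsSep3 G S C₁ C₂ C₃ ∧
      2 * (W ∩ C₁).ncard ≤ W.ncard ∧ 2 * (W ∩ C₂).ncard ≤ W.ncard ∧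
      2 * (W ∩ C₃).ncard ≤ W.ncard := by
  obtain ⟨C₁, C₂, h₁, h₂, h₁₂, hw₁, hw₂, hw₃⟩ := exists_isComponentUnion_pair hS
  have h₃ := (h₁.union h₂).sdiff
  have h₁₃ : Disjoint C₁ (Sᶜ \ (C₁ ∪ C₂)) :=
    Set.disjoint_left.2 fun _ hx hx' => hx'.2 (Or.inl hx)
  have h₂₃ : Disjoint C₂ (Sᶜ \ (C₁ ∪ C₂)) :=
    Set.disjoint_left.2 fun _ hx hx' => hx'.2 (Or.inr hx)
  have hcover : S ∪ C₁ ∪ C₂ ∪ Sᶜ \ (C₁ ∪ C₂) = Set.univ := by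
    ext x
    simp only [Set.mem_union, Set.mem_sdiff, Set.mem_compl_iff, Set.mem_univ, iff_true]
    tauto
  refine ⟨C₁, C₂, _, hcover, h₁₂, h₁₃, h₂₃, ⟨?_, ?_, ?_, sepFrom_of_isComponentUnion h₁ h₁₂,
    sepFrom_of_isComponentUnion h₁ h₁₃, sepFrom_of_isComponentUnion h₂ h₂₃⟩, hw₁, hw₂, hw₃⟩
  exacts [Set.subset_compl_iff_disjoint_left.1 h₁.1, Set.subset_compl_iff_disjoint_left.1 h₂.1,
    Set.subset_compl_iff_disjoint_left.1 h₃.1]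

end Split

lemma ncard_inter_le_alphaOn {V : Type} [Finite V] {G : SimpleGraph V} {I : Finset V}
    (hI : G.IsIndep ↑I) (S : Set V) : ((↑I : Set V) ∩ S).ncard ≤ alphaOn G S := by
  classical
  have hcoe : (↑(I.filter (· ∈ S)) : Set V) = ↑I ∩ S := Finset.coe_filter _ _
  rw [← hcoe, Set.ncard_coe_finset]
  refine le_csSup ⟨Nat.card V, ?_⟩
    ⟨_, hcoe ▸ Set.inter_subset_right, Set.Pairwise.mono (hcoe ▸ Set.inter_subset_left) hI, rfl⟩
  rintro _ ⟨T, -, -, rfl⟩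
  exact Set.ncard_coe_finset T ▸ Set.ncard_le_card _

lemma ncard_le_two_mul_ncard_inter_union {V : Type} [Finite V] {W S A B C : Set V} {k : ℕ}
    (hcover : S ∪ A ∪ B ∪ C = Set.univ) (hS : (W ∩ S).ncard ≤ k)
    (hC : 2 * (W ∩ C).ncard ≤ W.ncard) : W.ncard ≤ 2 * (W ∩ (A ∪ B)).ncard + 2 * k := by
  have hsplit : W = W ∩ S ∪ W ∩ (A ∪ B) ∪ W ∩ C := by
    rw [← Set.inter_union_distrib_left, ← Set.inter_union_distrib_left, ← Set.union_assoc S A B,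
      hcover, Set.inter_univ]
  have hle : W.ncard ≤ (W ∩ S).ncard + (W ∩ (A ∪ B)).ncard + (W ∩ C).ncard := by
    nth_rw 1 [hsplit]
    exact (Set.ncard_union_le _ _).trans (Nat.add_le_add_right (Set.ncard_union_le _ _) _)
  omega

/-- if `tree-α(G) ≤ k` and `I` is an independent set, there is a partition
`(S, C1, C2, C3)` of `V(G)` with `S` a `(C1,C2,C3)`-separator, `α(S) ≤ k`, and
`|I ∩ (Cᵢ ∪ Cⱼ)| ≥ |I|/2 − k` for all distinct `i, j` (stated as
`|I| ≤ 2·|I ∩ (Cᵢ ∪ Cⱼ)| + 2k`). -/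
theorem stmt6 {V : Type} [Finite V] (G : SimpleGraph V) (k : ℕ)
    (hG : TreeAlphaLE G k) (I : Finset V) (hI : G.IsIndep ↑I) :
    ∃ S C1 C2 C3 : Set V,
      S ∪ C1 ∪ C2 ∪ C3 = Set.univ ∧
      Disjoint C1 C2 ∧ Disjoint C1 C3 ∧ Disjoint C2 C3 ∧
      IsSep3 G S C1 C2 C3 ∧
      alphaOn G S ≤ k ∧
      (∀ A B : Set V,
        ((A = C1 ∧ B = C2) ∨ (A = C1 ∧ B = C3) ∨ (A = C2 ∧ B = C3)) →
        I.card ≤ 2 * ((↑I : Set V) ∩ (A ∪ B)).ncard + 2 * k) := by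
  obtain ⟨T, tree, td, hbags⟩ := hG
  obtain ⟨t, hbalanced⟩ := td.exists_balanced_bag ↑I
  obtain ⟨C₁, C₂, C₃, hcover, h₁₂, h₁₃, h₂₃, hsep, hw₁, hw₂, hw₃⟩ :=
    exists_isSep3_balanced hbalanced
  have hS := (ncard_inter_le_alphaOn hI (td.bag t)).trans (hbags t)
  refine ⟨td.bag t, C₁, C₂, C₃, hcover, h₁₂, h₁₃, h₂₃, hsep, hbags t, ?_⟩
  rw [← Set.ncard_coe_finset I]
  rintro A B (⟨rfl, rfl⟩ | ⟨rfl, rfl⟩ | ⟨rfl, rfl⟩)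
  · exact ncard_le_two_mul_ncard_inter_union hcover hS hw₃
  · exact ncard_le_two_mul_ncard_inter_union (by rw [← hcover]; ac_rfl) hS hw₂
  · exact ncard_le_two_mul_ncard_inter_union (by rw [← hcover]; ac_rfl) hS hw₁
end

section
/- Let G be a graph and let (V1, V2, V3, S0, R) be disjoint vertex subsets. Let v ∈ R. If S is a (V1, V2, V3)-separator of G with S0 ⊆ S ⊆ S0 ∪ R, then S is also a (V1', V2', V3')-separator with S0' ⊆ S ⊆ S0' ∪ (R \ {v}) for at least one of the four modified tuples obtained by moving v either into V1, V2, V3 (with S0' = S0) or into S0 (with S0' = S0 ∪ {v}). Conversely, any such separator for one of the four modified instances is also a (V1, V2, V3)-separator with S0 ⊆ S ⊆ S0 ∪ R. -/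
open SimpleGraph

/-- A solution of the partial 3-way α-separator instance `(G, (V1,V2,V3), S0, R)`:
a `(V1,V2,V3)`-separator `S` with `S0 ⊆ S ⊆ S0 ∪ R`. -/
def Sol {V : Type} (G : SimpleGraph V) (V1 V2 V3 S0 R S : Set V) : Prop :=
  IsSep3 G S V1 V2 V3 ∧ S0 ⊆ S ∧ S ⊆ S0 ∪ R

private lemma sepFrom_mono {V : Type} {G : SimpleGraph V} {S A B A' B' : Set V}
    (h : SepFrom G S A B) (hA : A' ⊆ A) (hB : B' ⊆ B) : SepFrom G S A' B' :=
  fun a ha b hb h1 h2 => h a (hA ha) b (hB hb) h1 h2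

private lemma sepFrom_symm {V : Type} {G : SimpleGraph V} {S A B : Set V}
    (h : SepFrom G S A B) : SepFrom G S B A :=
  fun b hb a ha h1 h2 hr => h a ha b hb h2 h1 hr.symm

private lemma sepFrom_insert_right {V : Type} {G : SimpleGraph V} {S A B : Set V} {v : V}
    (h : SepFrom G S A B) (hv : v ∈ Sᶜ)
    (hnot : ∀ a ∈ A, ∀ (ha : a ∈ Sᶜ), ¬ (G.induce Sᶜ).Reachable ⟨a, ha⟩ ⟨v, hv⟩) :
    SepFrom G S A (B ∪ {v}) := by
  intro a ha b hb h1 h2 hr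
  rcases hb with hb | hb
  · exact h a ha b hb h1 h2 hr
  · cases hb
    exact hnot a ha h1 hr

/-- branching on a vertex `v ∈ R`: any solution of the instance is a solution
of one of the four instances obtained by moving `v` into `V1`, `V2`, `V3`, or `S0`; and
conversely every solution of any of those four instances solves the original one. -/
theorem stmt7 {V : Type} (G : SimpleGraph V) (V1 V2 V3 S0 R : Set V)
    (hdisj : ([V1, V2, V3, S0, R] : List (Set V)).Pairwise Disjoint)
    (v : V) (hv : v ∈ R) :
    (∀ S : Set V, Sol G V1 V2 V3 S0 R S →
      Sol G (V1 ∪ {v}) V2 V3 S0 (R \ {v}) S ∨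
      Sol G V1 (V2 ∪ {v}) V3 S0 (R \ {v}) S ∨
      Sol G V1 V2 (V3 ∪ {v}) S0 (R \ {v}) S ∨
      Sol G V1 V2 V3 (S0 ∪ {v}) (R \ {v}) S) ∧
    (∀ S : Set V,
      (Sol G (V1 ∪ {v}) V2 V3 S0 (R \ {v}) S ∨
       Sol G V1 (V2 ∪ {v}) V3 S0 (R \ {v}) S ∨
       Sol G V1 V2 (V3 ∪ {v}) S0 (R \ {v}) S ∨
       Sol G V1 V2 V3 (S0 ∪ {v}) (R \ {v}) S) →
      Sol G V1 V2 V3 S0 R S) := by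
  constructor
  · intro S hS
    obtain ⟨⟨hd1, hd2, hd3, h12, h13, h23⟩, hS0, hSR⟩ := hS
    by_cases hvS : v ∈ S
    · refine Or.inr (Or.inr (Or.inr ⟨⟨hd1, hd2, hd3, h12, h13, h23⟩, ?_, ?_⟩))
      · intro x hx
        rcases hx with hx | hx
        · exact hS0 hx
        · cases hx; exact hvS
      · intro x hx
        rcases hSR hx with h | h
        · exact Or.inl (Or.inl h)
        · by_cases hxv : x = v
          · exact Or.inl (Or.inr hxv)
          · exact Or.inr ⟨h, hxv⟩
    · have hvc : v ∈ Sᶜ := hvS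
      have hsub : S ⊆ S0 ∪ (R \ {v}) := by
        intro x hx
        rcases hSR hx with h | h
        · exact Or.inl h
        · refine Or.inr ⟨h, ?_⟩
          rintro rfl; exact hvS hx
      by_cases h2 : ∃ b ∈ V2, ∃ hb : b ∈ Sᶜ, (G.induce Sᶜ).Reachable ⟨v, hvc⟩ ⟨b, hb⟩
      · obtain ⟨b0, hb0, hb0c, hrb0⟩ := h2
        refine Or.inr (Or.inl ⟨⟨hd1, ?_, hd3, ?_, h13, ?_⟩, hS0, hsub⟩)
        · rw [Set.disjoint_union_right]
          exact ⟨hd2, Set.disjoint_singleton_right.mpr hvS⟩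
        · exact sepFrom_insert_right h12 hvc (fun a ha hac hr =>
            h12 a ha b0 hb0 hac hb0c (hr.trans hrb0))
        · exact sepFrom_symm (sepFrom_insert_right (sepFrom_symm h23) hvc
            (fun c hc hcc hr => h23 b0 hb0 c hc hb0c hcc (hrb0.symm.trans hr.symm)))
      · by_cases h3 : ∃ b ∈ V3, ∃ hb : b ∈ Sᶜ, (G.induce Sᶜ).Reachable ⟨v, hvc⟩ ⟨b, hb⟩
        · obtain ⟨b0, hb0, hb0c, hrb0⟩ := h3
          refine Or.inr (Or.inr (Or.inl ⟨⟨hd1, hd2, ?_, h12, ?_, ?_⟩, hS0, hsub⟩))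
          · rw [Set.disjoint_union_right]
            exact ⟨hd3, Set.disjoint_singleton_right.mpr hvS⟩
          · exact sepFrom_insert_right h13 hvc (fun a ha hac hr =>
              h13 a ha b0 hb0 hac hb0c (hr.trans hrb0))
          · exact sepFrom_insert_right h23 hvc (fun a ha hac hr =>
              h23 a ha b0 hb0 hac hb0c (hr.trans hrb0))
        · push_neg at h2 h3
          refine Or.inl ⟨⟨?_, hd2, hd3, ?_, ?_, h23⟩, hS0, hsub⟩
          · rw [Set.disjoint_union_right]
            exact ⟨hd1, Set.disjoint_singleton_right.mpr hvS⟩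
          · exact sepFrom_symm (sepFrom_insert_right (sepFrom_symm h12) hvc
              (fun b hb hbc hr => h2 b hb hbc hr.symm))
          · exact sepFrom_symm (sepFrom_insert_right (sepFrom_symm h13) hvc
              (fun b hb hbc hr => h3 b hb hbc hr.symm))
  · intro S hS
    have sub1 : V1 ⊆ V1 ∪ {v} := Set.subset_union_left
    rcases hS with h | h | h | h
    · obtain ⟨⟨d1, d2, d3, s12, s13, s23⟩, h0, h1⟩ := h
      refine ⟨⟨d1.mono_right Set.subset_union_left, d2, d3,
        sepFrom_mono s12 Set.subset_union_left subset_rfl,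
        sepFrom_mono s13 Set.subset_union_left subset_rfl, s23⟩, h0, ?_⟩
      exact h1.trans (Set.union_subset_union subset_rfl Set.diff_subset)
    · obtain ⟨⟨d1, d2, d3, s12, s13, s23⟩, h0, h1⟩ := h
      refine ⟨⟨d1, d2.mono_right Set.subset_union_left, d3,
        sepFrom_mono s12 subset_rfl Set.subset_union_left, s13,
        sepFrom_mono s23 Set.subset_union_left subset_rfl⟩, h0, ?_⟩
      exact h1.trans (Set.union_subset_union subset_rfl Set.diff_subset)
    · obtain ⟨⟨d1, d2, d3, s12, s13, s23⟩, h0, h1⟩ := h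
      refine ⟨⟨d1, d2, d3.mono_right Set.subset_union_left, s12,
        sepFrom_mono s13 subset_rfl Set.subset_union_left,
        sepFrom_mono s23 subset_rfl Set.subset_union_left⟩, h0, ?_⟩
      exact h1.trans (Set.union_subset_union subset_rfl Set.diff_subset)
    · obtain ⟨sep, h0, h1⟩ := h
      refine ⟨sep, fun x hx => h0 (Or.inl hx), fun x hx => ?_⟩
      rcases h1 hx with (h | h) | h
      · exact Or.inl h
      · cases h; exact Or.inr hv
      · exact Or.inr h.1
end

section
/- Let G be a graph and let (T, {X_t}) be a tree decomposition of G. For distinct nodes t', t'' of T, let P be the t',t''-path in T and define Y_t = X_t ∩ (X_{t'} ∪ X_{t''}) for t ∈ V(P). If X_{t'} ∪ X_{t''} = V(H) for H = G[X_{t'} ∪ X_{t''}] and every vertex and edge of H appears appropriately, then (P, {Y_t}_{t∈V(P)}) is a path decomposition of H; in particular, for every edge uv of H there is a node t ∈ V(P) with u, v ∈ Y_t. -/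
open SimpleGraph

/-! For a vertex `u`, the nodes whose bags contain `u` induce a subtree `T_u`, and in a tree a
connected vertex set contains every path between two of its vertices; applied to the subpath of
`P` between two nodes of `T_v`, this is the interpolation property of the `Y_t`.

For an edge `uv` with `u ∈ X_{t'}` and `v ∈ X_{t''}`, the subtrees `T_u` and `T_v` meet (some bag
contains the edge), so `T_u ∪ T_v` is connected and contains `P`. If `t''` is not in `T_u`, take
the step `xy` where `P` leaves `T_u`; then `y ∈ T_v`, and also `x ∈ T_v`: otherwise the tree paths
from a common node of `T_u` and `T_v` to `x` (inside `T_u`) and to `y` (inside `T_v`) would close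
a cycle with the edge `xy`. -/

namespace SimpleGraph

variable {T : Type*} {G : SimpleGraph T} {S U W : Set T}

lemma exists_isPath_support_subset_of_induce_preconnected (hS : (G.induce S).Preconnected)
    {a b : T} (ha : a ∈ S) (hb : b ∈ S) :
    ∃ p : G.Walk a b, p.IsPath ∧ ∀ x ∈ p.support, x ∈ S := by
  classical
  obtain ⟨w⟩ := hS ⟨a, ha⟩ ⟨b, hb⟩
  let q : G.Walk a b := w.map (Embedding.induce S).toHom
  have hqS : ∀ x ∈ q.support, x ∈ S := by
    intro x hx
    rw [show q.support = _ from Walk.support_map _ _, List.mem_map] at hx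
    obtain ⟨y, -, rfl⟩ := hx
    exact y.2
  exact ⟨q.bypass, q.bypass_isPath, fun x hx => hqS x (q.support_bypass_subset_support hx)⟩

namespace IsAcyclic

variable (hG : G.IsAcyclic)
include hG

lemma support_subset_of_induce_preconnected (hS : (G.induce S).Preconnected)
    {a b : T} {p : G.Walk a b} (hp : p.IsPath) (ha : a ∈ S) (hb : b ∈ S) :
    ∀ x ∈ p.support, x ∈ S := by
  obtain ⟨q, hq, hqS⟩ := exists_isPath_support_subset_of_induce_preconnected hS ha hb
  obtain rfl : p = q := congrArg Subtype.val ((hG.subsingleton_path a b).elim ⟨p, hp⟩ ⟨q, hq⟩)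
  exact hqS

lemma mem_or_mem_of_adj (hU : (G.induce U).Preconnected) (hW : (G.induce W).Preconnected)
    (hUW : (U ∩ W).Nonempty) {x y : T} (hx : x ∈ U) (hy : y ∈ W) (hxy : G.Adj x y) :
    x ∈ W ∨ y ∈ U := by
  by_contra! h
  obtain ⟨s, hsU, hsW⟩ := hUW
  obtain ⟨p, hp, hpU⟩ := exists_isPath_support_subset_of_induce_preconnected hU hsU hx
  obtain ⟨q, hq, hqW⟩ := exists_isPath_support_subset_of_induce_preconnected hW hsW hy
  have hxq : x ∉ q.support := fun hxq => h.1 (hqW x hxq)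
  exact h.2 (hpU y (hG.mem_support_of_ne_mem_support_of_adj_of_isPath hp hq hxy hxq))

lemma exists_mem_support_inter (hU : (G.induce U).Preconnected)
    (hW : (G.induce W).Preconnected) (hUW : (U ∩ W).Nonempty) {a b : T} {p : G.Walk a b}
    (hp : p.IsPath) (ha : a ∈ U) (hb : b ∈ W) : ∃ t ∈ p.support, t ∈ U ∧ t ∈ W := by
  by_cases hbU : b ∈ U
  · exact ⟨b, p.end_mem_support, hbU, hb⟩
  obtain ⟨d, hd, hfstU, hsndU⟩ := p.exists_boundary_dart U ha hbU
  have hunion := (induce_union_connected hU hW hUW).preconnected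
  have hsndW : d.snd ∈ W :=
    (hG.support_subset_of_induce_preconnected hunion hp (.inl ha) (.inr hb) d.snd
      (p.dart_snd_mem_support_of_mem_darts hd)).resolve_left hsndU
  refine ⟨d.fst, p.dart_fst_mem_support_of_mem_darts hd, hfstU, ?_⟩
  exact (hG.mem_or_mem_of_adj hU hW hUW hfstU hsndW d.adj).resolve_right hsndU

lemma getVert_mem_of_le_of_le (hS : (G.induce S).Preconnected) {a b : T} {p : G.Walk a b}
    (hp : p.IsPath) {i j l : ℕ} (hij : i ≤ j) (hjl : j ≤ l)
    (hi : p.getVert i ∈ S) (hl : p.getVert l ∈ S) : p.getVert j ∈ S := by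
  let q := (p.drop i).take (l - i)
  have hq : q.IsPath := (hp.drop i).take (l - i)
  have hqS := hG.support_subset_of_induce_preconnected hS hq hi (by simpa [hij.trans hjl])
  have hj : i + min (l - i) (j - i) = j := by omega
  simpa [q, hj] using hqS _ (q.getVert_mem_support (j - i))

end IsAcyclic

end SimpleGraph

theorem stmt14_general {V T : Type} (G : SimpleGraph V)
    (tree : SimpleGraph T) (td : TreeDecomp G tree)
    (t' t'' : T)
    (p : tree.Walk t' t'') (hp : p.IsPath) :
    let Y : T → Set V := fun t => td.bag t ∩ (td.bag t' ∪ td.bag t'')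
    (∀ v ∈ td.bag t' ∪ td.bag t'', ∃ t ∈ p.support, v ∈ Y t) ∧
    (∀ u v : V, u ∈ td.bag t' ∪ td.bag t'' → v ∈ td.bag t' ∪ td.bag t'' →
      G.Adj u v → ∃ t ∈ p.support, u ∈ Y t ∧ v ∈ Y t) ∧
    (∀ v : V, ∀ i j l : Fin p.support.length, i ≤ j → j ≤ l →
      v ∈ Y (p.support.get i) → v ∈ Y (p.support.get l) → v ∈ Y (p.support.get j)) := by
  intro Y
  have hT := td.isTree.isAcyclic
  have hconn (v : V) := (td.conn v).preconnected
  have cross {u v : V} (hu : u ∈ td.bag t') (hv : v ∈ td.bag t'') (huv : G.Adj u v) :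
      ∃ t ∈ p.support, u ∈ td.bag t ∧ v ∈ td.bag t :=
    hT.exists_mem_support_inter (hconn u) (hconn v) (td.edge_bag huv) hp hu hv
  refine ⟨?_, ?_, ?_⟩
  · rintro v (hv | hv)
    · exact ⟨t', p.start_mem_support, hv, .inl hv⟩
    · exact ⟨t'', p.end_mem_support, hv, .inr hv⟩
  · rintro u v (hu | hu) (hv | hv) huv
    · exact ⟨t', p.start_mem_support, ⟨hu, .inl hu⟩, hv, .inl hv⟩
    · obtain ⟨t, ht, htu, htv⟩ := cross hu hv huv
      exact ⟨t, ht, ⟨htu, .inl hu⟩, htv, .inr hv⟩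
    · obtain ⟨t, ht, htv, htu⟩ := cross hv hu huv.symm
      exact ⟨t, ht, ⟨htu, .inr hu⟩, htv, .inl hv⟩
    · exact ⟨t'', p.end_mem_support, ⟨hu, .inr hu⟩, hv, .inr hv⟩
  · intro v i j l hij hjl hvi hvl
    simp only [List.get_eq_getElem, Walk.support_getElem_eq_getVert] at hvi hvl ⊢
    exact ⟨hT.getVert_mem_of_le_of_le (hconn v) hp hij hjl hvi.1 hvl.1, hvi.2⟩

/-- restricting a tree decomposition to the path `P` between two nodes
`t', t''`, with bags `Y_t = X_t ∩ (X_{t'} ∪ X_{t''})`, yields a path decomposition of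
`H = G[X_{t'} ∪ X_{t''}]`: every vertex of `H` is in some `Y_t`, for every edge of `H`
some `Y_t` contains both endpoints, and each vertex appears in a contiguous stretch of `P`. -/
theorem stmt14 {V T : Type} (G : SimpleGraph V)
    (tree : SimpleGraph T) (td : TreeDecomp G tree)
    (t' t'' : T) (hne : t' ≠ t'')
    (p : tree.Walk t' t'') (hp : p.IsPath) :
    let Y : T → Set V := fun t => td.bag t ∩ (td.bag t' ∪ td.bag t'')
    (∀ v ∈ td.bag t' ∪ td.bag t'', ∃ t ∈ p.support, v ∈ Y t) ∧
    (∀ u v : V, u ∈ td.bag t' ∪ td.bag t'' → v ∈ td.bag t' ∪ td.bag t'' →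
      G.Adj u v → ∃ t ∈ p.support, u ∈ Y t ∧ v ∈ Y t) ∧
    (∀ v : V, ∀ i j l : Fin p.support.length, i ≤ j → j ≤ l →
      v ∈ Y (p.support.get i) → v ∈ Y (p.support.get l) → v ∈ Y (p.support.get j)) :=
  stmt14_general G tree td t' t'' p hp
end
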